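/- Let Y be a finite label set with |Y| = K, and let P^S, P^T be probability measures on Z × Y (Z a metric space) such that p_k := P^S(Y=y_k) > 0 and q_k := P^T(Y=y_k) > 0 for every k. Endow Z × Y with the distance d((z,y),(z',y')) = d_Z(z,z') + 𝟙[y ≠ y']·M for some M > 0 (or any well-defined metric making distinct labels positively separated). Then the conditional symmetric support divergence D^c_supp(P^S_{Z|Y}, P^T_{Z|Y}) = Σ_k [ p_k E_{z∼P^S_{Z|k}} d_Z(z, supp(P^T_{Z|k})) + q_k E_{z∼P^T_{Z|k}} d_Z(z, supp(P^S_{Z|k})) ] equals zero if and only if the symmetric support divergence of the joint distributions D_supp(P^S_{Z,Y}, P^T_{Z,Y}) equals zero. -/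

import Mathlib

/-!
Labels in a finite metric space are isolated points, so the support of the joint law
`∑ y, p y • (P_{Z|y} ⊗ δ_y)` is the disjoint union of the slices `supp P_{Z|y} × {y}`.
Hence `(z, y)` is at distance zero from the joint support iff `z` is at distance zero from
`supp P_{Z|y}`, and the joint distance is dominated by the conditional one, hence integrable.
Splitting the joint integral along the labels, with positive weights, both divergences vanish
iff these nonnegative distances vanish almost everywhere, label by label.
-/

open MeasureTheory Metric Filter Topology Set
open scoped ENNReal

def msupport {Z : Type*} [TopologicalSpace Z] [MeasurableSpace Z]
    (μ : Measure Z) : Set Z :=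
  {z | ∀ U ∈ nhds z, μ U ≠ 0}

namespace MeasureTheory.Measure

section Support

variable {X : Type*} [TopologicalSpace X] [MeasurableSpace X]

lemma msupport_eq_support (μ : Measure X) : msupport μ = μ.support := by
  ext x
  simp only [msupport, mem_ofPred_eq, mem_support_iff_forall, pos_iff_ne_zero]

lemma support_smul {c : ℝ≥0∞} (hc : c ≠ 0) (μ : Measure X) :
    (c • μ).support = μ.support :=
  subset_antisymm smul_absolutelyContinuous.support_mono
    (absolutelyContinuous_smul hc).support_mono

lemma support_finset_sum {ι : Type*} (s : Finset ι) (μ : ι → Measure X) :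
    (∑ i ∈ s, μ i).support = ⋃ i ∈ s, (μ i).support := by
  classical
  induction s using Finset.induction_on with
  | empty => simp
  | insert i s hi ih => rw [Finset.sum_insert hi, support_add, ih, Finset.set_biUnion_insert]

variable {Y : Type*} [TopologicalSpace Y] [DiscreteTopology Y] [MeasurableSpace Y]
  [MeasurableSingletonClass Y]

lemma mem_support_map_prodMk_right {μ : Measure X} {x : X} {y y' : Y} :
    (x, y') ∈ (μ.map (·, y)).support ↔ y' = y ∧ x ∈ μ.support := by
  simp only [mem_support_iff_forall, (measurableEmbedding_prod_mk_right y).map_apply]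
  by_cases hy : y' = y
  · subst hy
    refine ⟨fun h => ⟨rfl, fun V hV => ?_⟩, fun ⟨_, h⟩ U hU => h _ ?_⟩
    · simpa using h (V ×ˢ {y'}) (prod_mem_nhds hV (isOpen_discrete _ |>.mem_nhds rfl))
    · exact (continuous_id.prodMk continuous_const).continuousAt.preimage_mem_nhds hU
  · refine iff_of_false (fun h => ?_) (fun h => hy h.1)
    have hopen : univ ×ˢ {y'} ∈ 𝓝 (x, y') :=
      prod_mem_nhds univ_mem (isOpen_discrete _ |>.mem_nhds rfl)
    simpa [preimage, Ne.symm hy] using h _ hopen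

lemma mem_support_sum_smul_map_prodMk_right [Fintype Y] {c : Y → ℝ≥0∞}
    (hc : ∀ y, c y ≠ 0) {μ : Y → Measure X} {x : X} {y : Y} :
    (x, y) ∈ (∑ y', c y' • (μ y').map (·, y')).support ↔ x ∈ (μ y).support := by
  simp [support_finset_sum, support_smul (hc _), mem_support_map_prodMk_right]

end Support

end MeasureTheory.Measure

lemma isometry_prodMk_right {X Y : Type*} [PseudoMetricSpace X] [PseudoMetricSpace Y]
    (y : Y) : Isometry (fun x : X => (x, y)) :=
  Isometry.of_dist_eq fun _ _ => by simp [Prod.dist_eq]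

lemma infDist_prodMk_le {X Y : Type*} [PseudoMetricSpace X] [PseudoMetricSpace Y]
    {s : Set X} {t : Set (X × Y)} {y : Y} (hst : ∀ x ∈ s, (x, y) ∈ t) (hs : s.Nonempty)
    (x : X) : infDist (x, y) t ≤ infDist x s := by
  calc infDist (x, y) t ≤ infDist (x, y) ((·, y) '' s) :=
        infDist_le_infDist_of_subset (image_subset_iff.2 hst) (hs.image _)
    _ = infDist x s := infDist_image (isometry_prodMk_right y)

lemma integral_eq_zero_iff_of_eq_zero_iff {α : Type*} [MeasurableSpace α] {μ : Measure α}
    {f g : α → ℝ} (hf : 0 ≤ f) (hg : 0 ≤ g) (hfi : Integrable f μ) (hgi : Integrable g μ)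
    (hfg : ∀ a, f a = 0 ↔ g a = 0) : ∫ a, f a ∂μ = 0 ↔ ∫ a, g a ∂μ = 0 := by
  rw [integral_eq_zero_iff_of_nonneg hf hfi, integral_eq_zero_iff_of_nonneg hg hgi]
  exact eventually_congr (Eventually.of_forall hfg)

lemma integral_sum_smul_map_prodMk_right {X Y : Type*} [MeasurableSpace X]
    [MeasurableSpace Y] [MeasurableSingletonClass Y] [Fintype Y] {c : Y → ℝ}
    (hc : ∀ y, 0 ≤ c y) {μ : Y → Measure X} {f : X × Y → ℝ}
    (hf : ∀ y, Integrable (fun x => f (x, y)) (μ y)) :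
    ∫ w, f w ∂(∑ y, ENNReal.ofReal (c y) • (μ y).map (·, y))
      = ∑ y, c y * ∫ x, f (x, y) ∂(μ y) := by
  have hmap y : Integrable f ((μ y).map (·, y)) :=
    (measurableEmbedding_prod_mk_right y).integrable_map_iff.2 (hf y)
  rw [integral_finsetSum_measure fun y _ => (hmap y).smul_measure ENNReal.ofReal_ne_top]
  refine Finset.sum_congr rfl fun y _ => ?_
  rw [integral_smul_measure, (measurableEmbedding_prod_mk_right y).integral_map,
    ENNReal.toReal_ofReal (hc y), smul_eq_mul]

lemma Finset.sum_mul_eq_zero_iff_of_pos {ι R : Type*} [Semiring R] [PartialOrder R]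
    [IsOrderedRing R] [NoZeroDivisors R] {s : Finset ι} {p a : ι → R}
    (hp : ∀ i ∈ s, 0 < p i) (ha : ∀ i ∈ s, 0 ≤ a i) :
    ∑ i ∈ s, p i * a i = 0 ↔ ∀ i ∈ s, a i = 0 := by
  rw [Finset.sum_eq_zero_iff_of_nonneg fun i hi => mul_nonneg (hp i hi).le (ha i hi)]
  exact forall₂_congr fun i hi => by simp [(hp i hi).ne']

open Measure in
theorem sum_integral_infDist_support_eq_zero_iff_joint {Z Y : Type*} [PseudoMetricSpace Z]
    [MeasurableSpace Z] [BorelSpace Z] [MetricSpace Y] [MeasurableSpace Y] [BorelSpace Y]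
    [Fintype Y] {p q : Y → ℝ} (hp : ∀ y, 0 < p y) (hq : ∀ y, 0 < q y)
    {μ ν : Y → Measure Z}
    (hν : ∀ y, (ν y).support.Nonempty)
    (hint : ∀ y, Integrable (fun z => infDist z (ν y).support) (μ y)) :
    ∑ y, p y * ∫ z, infDist z (ν y).support ∂(μ y) = 0 ↔
      ∫ w, infDist w (∑ y, ENNReal.ofReal (q y) • (ν y).map (·, y)).support
        ∂(∑ y, ENNReal.ofReal (p y) • (μ y).map (·, y)) = 0 := by
  set T := (∑ y, ENNReal.ofReal (q y) • (ν y).map (·, y)).support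
  have hmem (z : Z) (y : Y) : (z, y) ∈ T ↔ z ∈ (ν y).support :=
    mem_support_sum_smul_map_prodMk_right fun y => (ENNReal.ofReal_pos.2 (hq y)).ne'
  have hle (y : Y) (z : Z) : infDist (z, y) T ≤ infDist z (ν y).support :=
    infDist_prodMk_le (fun z' => (hmem z' y).2) (hν y) z
  have hzero (y : Y) (z : Z) : infDist z (ν y).support = 0 ↔ infDist (z, y) T = 0 := by
    rw [← isClosed_support.mem_iff_infDist_zero (hν y), ← hmem,
      isClosed_support.mem_iff_infDist_zero ⟨_, (hmem _ y).2 (hν y).some_mem⟩]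
  have hintT (y : Y) : Integrable (fun z => infDist (z, y) T) (μ y) :=
    (hint y).mono' (continuous_infDist_pt T |>.comp (by fun_prop)).aestronglyMeasurable
      (ae_of_all _ fun z => by simpa [abs_of_nonneg infDist_nonneg] using hle y z)
  rw [integral_sum_smul_map_prodMk_right (fun y => (hp y).le) hintT,
    Finset.sum_mul_eq_zero_iff_of_pos (fun y _ => hp y)
      (fun y _ => integral_nonneg fun _ => infDist_nonneg),
    Finset.sum_mul_eq_zero_iff_of_pos (fun y _ => hp y)
      (fun y _ => integral_nonneg fun _ => infDist_nonneg)]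
  exact forall₂_congr fun y _ => integral_eq_zero_iff_of_eq_zero_iff (fun _ => infDist_nonneg)
    (fun _ => infDist_nonneg) (hint y) (hintT y) (hzero y)

theorem cssd_zero_iff_joint_ssd_zero_general
    {Z Y : Type*} [MetricSpace Z] [MeasurableSpace Z] [BorelSpace Z]
    [MetricSpace Y] [MeasurableSpace Y] [BorelSpace Y] [Fintype Y]
    (p q : Y → ℝ)
    (hp_pos : ∀ y, 0 < p y) (hq_pos : ∀ y, 0 < q y)
    (PSc PTc : Y → Measure Z)
    (PSJ PTJ : Measure (Z × Y))
    (hPSJ : PSJ = ∑ y, ENNReal.ofReal (p y) • (PSc y).map (fun z => (z, y)))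
    (hPTJ : PTJ = ∑ y, ENNReal.ofReal (q y) • (PTc y).map (fun z => (z, y)))
    (hsuppS : ∀ y, (msupport (PSc y)).Nonempty)
    (hsuppT : ∀ y, (msupport (PTc y)).Nonempty)
    (hintS : ∀ y, Integrable (fun z => infDist z (msupport (PTc y))) (PSc y))
    (hintT : ∀ y, Integrable (fun z => infDist z (msupport (PSc y))) (PTc y)) :
    (∑ y, (p y * (∫ z, infDist z (msupport (PTc y)) ∂(PSc y))
          + q y * (∫ z, infDist z (msupport (PSc y)) ∂(PTc y)))) = 0
      ↔ (∫ w, infDist w (msupport PTJ) ∂PSJ) + (∫ w, infDist w (msupport PSJ) ∂PTJ) = 0 := by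
  subst hPSJ hPTJ
  simp only [Measure.msupport_eq_support] at *
  have hnonneg {μ : Measure Z} {s : Set Z} : 0 ≤ ∫ z, infDist z s ∂μ :=
    integral_nonneg fun _ => infDist_nonneg
  rw [Finset.sum_add_distrib,
    add_eq_zero_iff_of_nonneg (Finset.sum_nonneg fun y _ => mul_nonneg (hp_pos y).le hnonneg)
      (Finset.sum_nonneg fun y _ => mul_nonneg (hq_pos y).le hnonneg),
    add_eq_zero_iff_of_nonneg (integral_nonneg fun _ => infDist_nonneg)
      (integral_nonneg fun _ => infDist_nonneg),
    sum_integral_infDist_support_eq_zero_iff_joint hp_pos hq_pos hsuppT hintS,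
    sum_integral_infDist_support_eq_zero_iff_joint hq_pos hp_pos hsuppS hintT]

/-- Proposition 4: with all class probabilities positive and a metric on the
joint space separating distinct labels, the conditional symmetric support divergence vanishes
iff the symmetric support divergence of the joint distributions vanishes. -/
theorem cssd_zero_iff_joint_ssd_zero
    {Z Y : Type*} [MetricSpace Z] [MeasurableSpace Z] [BorelSpace Z]
    [MetricSpace Y] [MeasurableSpace Y] [BorelSpace Y] [Fintype Y]
    (M : ℝ) (hM : 0 < M)
    (hsep : ∀ y y' : Y, y ≠ y' → M ≤ dist y y')
    (p q : Y → ℝ)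
    (hp_pos : ∀ y, 0 < p y) (hq_pos : ∀ y, 0 < q y)
    (hp_sum : ∑ y, p y = 1) (hq_sum : ∑ y, q y = 1)
    (PSc PTc : Y → Measure Z)
    [∀ y, IsProbabilityMeasure (PSc y)] [∀ y, IsProbabilityMeasure (PTc y)]
    (PSJ PTJ : Measure (Z × Y))
    (hPSJ : PSJ = ∑ y, ENNReal.ofReal (p y) • (PSc y).map (fun z => (z, y)))
    (hPTJ : PTJ = ∑ y, ENNReal.ofReal (q y) • (PTc y).map (fun z => (z, y)))
    (hsuppS : ∀ y, (msupport (PSc y)).Nonempty)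
    (hsuppT : ∀ y, (msupport (PTc y)).Nonempty)
    (hintS : ∀ y, Integrable (fun z => infDist z (msupport (PTc y))) (PSc y))
    (hintT : ∀ y, Integrable (fun z => infDist z (msupport (PSc y))) (PTc y))
    (hintJS : Integrable (fun w => infDist w (msupport PTJ)) PSJ)
    (hintJT : Integrable (fun w => infDist w (msupport PSJ)) PTJ) :
    (∑ y, (p y * (∫ z, infDist z (msupport (PTc y)) ∂(PSc y))
          + q y * (∫ z, infDist z (msupport (PSc y)) ∂(PTc y)))) = 0
      ↔ (∫ w, infDist w (msupport PTJ) ∂PSJ) + (∫ w, infDist w (msupport PSJ) ∂PTJ) = 0 :=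
  cssd_zero_iff_joint_ssd_zero_general p q hp_pos hq_pos PSc PTc PSJ PTJ hPSJ hPTJ hsuppS hsuppT
    hintS hintT
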